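/- Let (M, K, β) be a braided Grothendieck–Verdier category. Then (i) the monoidal functor D² : M ≅ M (with its canonical monoidal structure) is braided, and (ii) there is a canonical monoidal isomorphism D⁴ ≅ Id_M, namely γ_M = θ⁺θ⁻ : Id_M ≅ D⁴, where for each X one has γ_X = θ⁺_{D²X} ∘ θ⁻_X = D²(θ⁺_X) ∘ θ⁻_X = θ⁻_{D²X} ∘ θ⁺_X = D²(θ⁻_X) ∘ θ⁺_X. -/

import Mathlib

open CategoryTheory Opposite MonoidalCategory

universe v u

/-- A Grothendieck–Verdier category structure on a monoidal category `M`: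
a dualizing object `K`, the duality anti-equivalence `D`, and the natural
family of bijections `Hom(X ⊗ Y, K) ≃ Hom(X, D Y)`. -/
structure GVCat (M : Type u) [Category.{v} M] [MonoidalCategory M] where
  K : M
  D : Mᵒᵖ ≌ M
  homEquiv : ∀ X Y : M, (X ⊗ Y ⟶ K) ≃ (X ⟶ D.functor.obj (op Y))
  homEquiv_natX : ∀ {X X' : M} (Y : M) (f : X' ⟶ X) (h : X ⊗ Y ⟶ K),
    homEquiv X' Y (f ▷ Y ≫ h) = f ≫ homEquiv X Y h
  homEquiv_natY : ∀ (X : M) {Y Y' : M} (g : Y' ⟶ Y) (h : X ⊗ Y ⟶ K),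
    homEquiv X Y' (X ◁ g ≫ h) = homEquiv X Y h ≫ D.functor.map g.op

namespace GVCat

variable {M : Type u} [Category.{v} M] [MonoidalCategory M] (G : GVCat M)

/-- The duality functor on objects: `D Y`. -/
abbrev d (Y : M) : M := G.D.functor.obj (op Y)

/-- The inverse duality functor on objects: `D⁻¹ X`. -/
abbrev dinv (X : M) : M := (G.D.inverse.obj X).unop

/-- The duality functor on morphisms. -/
abbrev dmap {A B : M} (f : A ⟶ B) : G.d B ⟶ G.d A := G.D.functor.map f.op

/-- The inverse duality functor on morphisms. -/
abbrev dinvmap {A B : M} (f : A ⟶ B) : G.dinv B ⟶ G.dinv A := (G.D.inverse.map f).unop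

/-- `D² Y`. -/
abbrev dd (Y : M) : M := G.d (G.d Y)

/-- `D²` as a covariant endofunctor of `M`. -/
def ddF : M ⥤ M := G.D.functor.rightOp ⋙ G.D.functor

/-- The second defining natural bijection `Hom(X ⊗ Y, K) ≃ Hom(Y, D⁻¹ X)`. -/
def homEquiv' (X Y : M) : (X ⊗ Y ⟶ G.K) ≃ (Y ⟶ G.dinv X) :=
  (G.homEquiv X Y).trans
    ((G.D.symm.toAdjunction.homEquiv X (op Y)).symm.trans (opEquiv _ _))

/-- The canonical isomorphism `D⁻¹ (D X) ≅ X`. -/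
def dinvD (X : M) : G.dinv (G.d X) ≅ X := (G.D.unitIso.app (op X)).unop

/-- The canonical isomorphism `D (D⁻¹ X) ≅ X`. -/
def dDinv (X : M) : G.d (G.dinv X) ≅ X := G.D.counitIso.app X

/-- The canonical natural bijection `g : Hom(X ⊗ Y, K) ≃ Hom(D²Y ⊗ X, K)`. -/
def g (X Y : M) : (X ⊗ Y ⟶ G.K) ≃ (G.dd Y ⊗ X ⟶ G.K) :=
  ((G.homEquiv X Y).trans ((Iso.refl X).homCongr (G.dinvD (G.d Y)).symm)).trans
    (G.homEquiv' (G.dd Y) X).symm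

end GVCat

namespace GVCat

variable {M : Type u} [Category.{v} M] [MonoidalCategory M] (G : GVCat M)

/-- The composite bijection
`Hom(D²(Y₁⊗Y₂) ⊗ X, K) ≃ Hom((D²Y₁ ⊗ D²Y₂) ⊗ X, K)` obtained from `g⁻¹` followed by two
applications of `g` (with the associativity constraints inserted). -/
def gchain (Y₁ Y₂ X : M) :
    (G.dd (Y₁ ⊗ Y₂) ⊗ X ⟶ G.K) ≃ ((G.dd Y₁ ⊗ G.dd Y₂) ⊗ X ⟶ G.K) :=
  (G.g X (Y₁ ⊗ Y₂)).symm.trans <|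
    ((α_ X Y₁ Y₂).symm.homCongr (Iso.refl G.K)).trans <|
      (G.g (X ⊗ Y₁) Y₂).trans <|
        ((α_ (G.dd Y₂) X Y₁).symm.homCongr (Iso.refl G.K)).trans <|
          (G.g (G.dd Y₂ ⊗ X) Y₁).trans
            ((α_ (G.dd Y₁) (G.dd Y₂) X).symm.homCongr (Iso.refl G.K))

/-- The characterizing property of the canonical monoidal structure
`u : D²(Y₁ ⊗ Y₂) ≅ D²Y₁ ⊗ D²Y₂` on `D²`. -/
def UChar (u : ∀ Y₁ Y₂ : M, G.dd (Y₁ ⊗ Y₂) ≅ G.dd Y₁ ⊗ G.dd Y₂) : Prop :=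
  ∀ (Y₁ Y₂ X : M) (h : G.dd (Y₁ ⊗ Y₂) ⊗ X ⟶ G.K),
    ((u Y₁ Y₂).inv ▷ X) ≫ h = G.gchain Y₁ Y₂ X h

/-- The characterizing property of the canonical unit morphism `η : 𝟙 ⟶ D² 𝟙`. -/
def EtaChar (η : 𝟙_ M ⟶ G.dd (𝟙_ M)) : Prop :=
  ∀ (X : M) (h : X ⊗ 𝟙_ M ⟶ G.K),
    (η ▷ X) ≫ G.g X (𝟙_ M) h = (λ_ X).hom ≫ (ρ_ X).inv ≫ h

/-- The morphism `D²K ⟶ K` which is the image of `id K` under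
`Hom(𝟙 ⊗ K, K) ≅ Hom(D²K ⊗ 𝟙, K)`; it is inverse to the canonical isomorphism
`K ≅ D²K`. -/
def mK : G.dd G.K ⟶ G.K := (ρ_ (G.dd G.K)).inv ≫ G.g (𝟙_ M) G.K (λ_ G.K).hom

/-- `cK : K ⟶ D²K` is the canonical isomorphism `K ≅ D²K`. -/
def CKChar (cK : G.K ⟶ G.dd G.K) : Prop :=
  cK ≫ G.mK = 𝟙 G.K ∧ G.mK ≫ cK = 𝟙 (G.dd G.K)

variable [BraidedCategory M]

/-- The characterizing property of `θ⁺ : Id ≅ D²`: precomposition with `θ⁺_Y ⊗ id X`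
equals `g⁻¹` followed by pullback along `β⁺_{Y,X} = β_{Y,X}`. -/
def ThetaPlusChar (θ : ∀ Y : M, Y ≅ G.dd Y) : Prop :=
  ∀ (Y X : M) (h : G.dd Y ⊗ X ⟶ G.K),
    ((θ Y).hom ▷ X) ≫ h = (β_ Y X).hom ≫ (G.g X Y).symm h

/-- The characterizing property of `θ⁻ : Id ≅ D²`: precomposition with `θ⁻_Y ⊗ id X`
equals `g⁻¹` followed by pullback along `β⁻_{Y,X} = β_{X,Y}⁻¹`. -/
def ThetaMinusChar (θ : ∀ Y : M, Y ≅ G.dd Y) : Prop :=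
  ∀ (Y X : M) (h : G.dd Y ⊗ X ⟶ G.K),
    ((θ Y).hom ▷ X) ≫ h = (β_ X Y).inv ≫ (G.g X Y).symm h

end GVCat

/-- A twist on a braided category: an automorphism `τ` of the identity functor with
`τ_{X⊗Y} = β_{Y,X} ∘ β_{X,Y} ∘ (τ_X ⊗ τ_Y)`; equivalently, a monoidal isomorphism
`Id ≅ J` where `J` is the Joyal–Street equivalence. -/
def IsTwist {M : Type u} [Category.{v} M] [MonoidalCategory M] [BraidedCategory M]
    (τ : 𝟭 M ≅ 𝟭 M) : Prop :=
  ∀ X Y : M,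
    τ.hom.app (X ⊗ Y) = (τ.hom.app X ⊗ₘ τ.hom.app Y) ≫ (β_ X Y).hom ≫ (β_ Y X).hom

section Aux
open CategoryTheory Opposite MonoidalCategory BraidedCategory

set_option linter.unusedSectionVars false

namespace GVCat

variable {M : Type u} [Category.{v} M] [MonoidalCategory M] (G : GVCat M)

/-- Separation: morphisms are determined by pairing with `K`. -/
theorem sep {A B : M} {f f' : A ⟶ B}
    (w : ∀ (Z : M) (h : B ⊗ Z ⟶ G.K), f ▷ Z ≫ h = f' ▷ Z ≫ h) : f = f' := by
  apply (cancel_mono (G.dDinv B).inv).1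
  have h1 := G.homEquiv_natX (G.dinv B) f ((G.homEquiv B (G.dinv B)).symm (G.dDinv B).inv)
  have h2 := G.homEquiv_natX (G.dinv B) f' ((G.homEquiv B (G.dinv B)).symm (G.dDinv B).inv)
  rw [w] at h1
  rw [h2] at h1
  rw [Equiv.apply_symm_apply] at h1
  exact h1.symm

theorem homEquiv'_natX {X' X : M} (f : X' ⟶ X) (Y : M) (h : X ⊗ Y ⟶ G.K) :
    G.homEquiv' X' Y (f ▷ Y ≫ h) = G.homEquiv' X Y h ≫ G.dinvmap f := by
  simp [homEquiv', G.homEquiv_natX, opEquiv, Equivalence.toAdjunction, Adjunction.homEquiv]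

theorem homEquiv'_symm_natX {X' X : M} (f : X' ⟶ X) (Y : M) (k : Y ⟶ G.dinv X) :
    (G.homEquiv' X' Y).symm (k ≫ G.dinvmap f) = f ▷ Y ≫ (G.homEquiv' X Y).symm k := by
  apply (G.homEquiv' X' Y).injective
  rw [Equiv.apply_symm_apply, G.homEquiv'_natX, Equiv.apply_symm_apply]

theorem g_apply (X Y : M) (h : X ⊗ Y ⟶ G.K) :
    G.g X Y h = (G.homEquiv' (G.dd Y) X).symm
      (G.homEquiv X Y h ≫ (G.dinvD (G.d Y)).inv) := by
  simp [g, Iso.homCongr_apply]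

theorem dinvD_nat {A B : M} (v : A ⟶ B) :
    v ≫ (G.dinvD B).inv = (G.dinvD A).inv ≫ G.dinvmap (G.dmap v) := by
  have h2 := congrArg Quiver.Hom.unop (G.D.unitIso.inv.naturality v.op)
  simp only [unop_comp] at h2
  exact h2.symm

theorem g_natY {Y' Y : M} (f : Y' ⟶ Y) (X : M) (h : X ⊗ Y ⟶ G.K) :
    G.g X Y' (X ◁ f ≫ h) = (G.ddF.map f ▷ X) ≫ G.g X Y h := by
  rw [g_apply, g_apply, G.homEquiv_natY, Category.assoc, G.dinvD_nat,
    ← Category.assoc, G.homEquiv'_symm_natX]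
  rfl

end GVCat
end Aux
section Aux2
open CategoryTheory Opposite MonoidalCategory BraidedCategory

set_option linter.unusedSectionVars false

namespace GVCat

variable {M : Type u} [Category.{v} M] [MonoidalCategory M] (G : GVCat M)

theorem gchain_apply (Y₁ Y₂ X : M) (h : G.dd (Y₁ ⊗ Y₂) ⊗ X ⟶ G.K) :
    G.gchain Y₁ Y₂ X h =
      (α_ (G.dd Y₁) (G.dd Y₂) X).hom ≫
        G.g (G.dd Y₂ ⊗ X) Y₁ ((α_ (G.dd Y₂) X Y₁).hom ≫
          G.g (X ⊗ Y₁) Y₂ ((α_ X Y₁ Y₂).hom ≫ (G.g X (Y₁ ⊗ Y₂)).symm h)) := by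
  simp [gchain, Iso.homCongr_apply]

variable [BraidedCategory M]

theorem shuffle {A B X Y Z W : M} (cb : ∀ P Q : M, P ⊗ Q ≅ Q ⊗ P)
    (hcbr : ∀ (P : M) {Q Q' : M} (f : Q ⟶ Q'), P ◁ f ≫ (cb P Q').hom = (cb P Q).hom ≫ f ▷ P)
    (tx : A ⟶ X) (ty : B ⟶ Y) (p : Z ⊗ (X ⊗ Y) ⟶ W) :
    (α_ A B Z).hom ≫ tx ▷ (B ⊗ Z) ≫ (cb X (B ⊗ Z)).hom ≫ (α_ B Z X).hom ≫
      ty ▷ (Z ⊗ X) ≫ (cb Y (Z ⊗ X)).hom ≫ (α_ Z X Y).hom ≫ p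
    = ((tx ⊗ₘ ty) ▷ Z) ≫ (α_ X Y Z).hom ≫ (cb X (Y ⊗ Z)).hom ≫ (α_ Y Z X).hom ≫
      (cb Y (Z ⊗ X)).hom ≫ (α_ Z X Y).hom ≫ p := by
  rw [← associator_naturality_left_assoc ty Z X]
  slice_lhs 3 4 => rw [← hcbr]
  slice_lhs 2 3 => rw [← whisker_exchange]
  slice_lhs 1 2 => rw [← associator_naturality_middle]
  slice_lhs 2 3 => rw [← associator_naturality_left]
  rw [tensorHom_def' tx ty, comp_whiskerRight]
  simp only [Category.assoc]

end GVCat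
end Aux2
section Aux3
open CategoryTheory Opposite MonoidalCategory BraidedCategory

set_option linter.unusedSectionVars false

namespace GVCat

variable {M : Type u} [Category.{v} M] [MonoidalCategory M] (G : GVCat M)

theorem cb_tensor_nat (cb : ∀ P Q : M, P ⊗ Q ≅ Q ⊗ P)
    (hcbr : ∀ (P : M) {Q Q' : M} (f : Q ⟶ Q'), P ◁ f ≫ (cb P Q').hom = (cb P Q).hom ≫ f ▷ P)
    (hcbl : ∀ {P P' : M} (f : P ⟶ P') (Q : M), f ▷ Q ≫ (cb P' Q).hom = (cb P Q).hom ≫ Q ◁ f)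
    {P P' Q Q' : M} (f : P ⟶ P') (g : Q ⟶ Q') :
    (f ⊗ₘ g) ≫ (cb P' Q').hom = (cb P Q).hom ≫ (g ⊗ₘ f) := by
  rw [MonoidalCategory.tensorHom_def, Category.assoc, hcbr, ← Category.assoc, hcbl, Category.assoc,
    ← tensorHom_def']

theorem cb_inv_tensor_nat (cb : ∀ P Q : M, P ⊗ Q ≅ Q ⊗ P)
    (hcbr : ∀ (P : M) {Q Q' : M} (f : Q ⟶ Q'), P ◁ f ≫ (cb P Q').hom = (cb P Q).hom ≫ f ▷ P)
    (hcbl : ∀ {P P' : M} (f : P ⟶ P') (Q : M), f ▷ Q ≫ (cb P' Q).hom = (cb P Q).hom ≫ Q ◁ f)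
    {P P' Q Q' : M} (f : P ⟶ P') (g : Q ⟶ Q') :
    (f ⊗ₘ g) ≫ (cb Q' P').inv = (cb Q P).inv ≫ (g ⊗ₘ f) := by
  apply (cancel_mono (cb Q' P').hom).1
  rw [Category.assoc, Iso.inv_hom_id, Category.comp_id, Category.assoc,
    cb_tensor_nat cb hcbr hcbl g f, Iso.inv_hom_id_assoc]

variable [BraidedCategory M]

theorem g_eq_theta (cb : ∀ P Q : M, P ⊗ Q ≅ Q ⊗ P) (θ : ∀ Y : M, Y ≅ G.dd Y)
    (hθ : ∀ (Y X : M) (h : G.dd Y ⊗ X ⟶ G.K),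
      ((θ Y).hom ▷ X) ≫ h = (cb Y X).hom ≫ (G.g X Y).symm h)
    (A B : M) (k : A ⊗ B ⟶ G.K) :
    G.g A B k = ((θ B).inv ▷ A) ≫ (cb B A).hom ≫ k := by
  have h1 := hθ B A (G.g A B k)
  rw [Equiv.symm_apply_apply] at h1
  rw [← h1, ← comp_whiskerRight_assoc, Iso.inv_hom_id, id_whiskerRight, Category.id_comp]

theorem theta_natural (cb : ∀ P Q : M, P ⊗ Q ≅ Q ⊗ P) (θ : ∀ Y : M, Y ≅ G.dd Y)
    (hcbl : ∀ {P P' : M} (f : P ⟶ P') (Q : M), f ▷ Q ≫ (cb P' Q).hom = (cb P Q).hom ≫ Q ◁ f)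
    (hθ : ∀ (Y X : M) (h : G.dd Y ⊗ X ⟶ G.K),
      ((θ Y).hom ▷ X) ≫ h = (cb Y X).hom ≫ (G.g X Y).symm h)
    {X Y : M} (q : X ⟶ Y) : q ≫ (θ Y).hom = (θ X).hom ≫ G.ddF.map q := by
  apply G.sep; intro Z h
  have hg : (G.ddF.map q ▷ Z) ≫ h = G.g Z X (Z ◁ q ≫ (G.g Z Y).symm h) := by
    rw [G.g_natY q Z ((G.g Z Y).symm h), Equiv.apply_symm_apply]
  erw [comp_whiskerRight, Category.assoc, hθ, comp_whiskerRight, Category.assoc, hg, hθ,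
    Equiv.symm_apply_apply, ← Category.assoc, hcbl, Category.assoc]

theorem theta_dd (cb : ∀ P Q : M, P ⊗ Q ≅ Q ⊗ P) (θ : ∀ Y : M, Y ≅ G.dd Y)
    (hcbl : ∀ {P P' : M} (f : P ⟶ P') (Q : M), f ▷ Q ≫ (cb P' Q).hom = (cb P Q).hom ≫ Q ◁ f)
    (hθ : ∀ (Y X : M) (h : G.dd Y ⊗ X ⟶ G.K),
      ((θ Y).hom ▷ X) ≫ h = (cb Y X).hom ≫ (G.g X Y).symm h)
    (X : M) : (θ (G.dd X)).hom = G.ddF.map (θ X).hom := by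
  have := G.theta_natural cb θ hcbl hθ (θ X).hom
  exact (cancel_epi (θ X).hom).1 this

theorem theta_unit (cb : ∀ P Q : M, P ⊗ Q ≅ Q ⊗ P) (θ : ∀ Y : M, Y ≅ G.dd Y)
    (hθ : ∀ (Y X : M) (h : G.dd Y ⊗ X ⟶ G.K),
      ((θ Y).hom ▷ X) ≫ h = (cb Y X).hom ≫ (G.g X Y).symm h)
    (hc1 : ∀ Z : M, (cb (𝟙_ M) Z).hom = (λ_ Z).hom ≫ (ρ_ Z).inv)
    (η : 𝟙_ M ⟶ G.dd (𝟙_ M)) (hη : G.EtaChar η) : (θ (𝟙_ M)).hom = η := by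
  apply G.sep; intro Z h
  have h2 := hη Z ((G.g Z (𝟙_ M)).symm h)
  rw [Equiv.apply_symm_apply] at h2
  rw [hθ, hc1, h2, Category.assoc]

theorem gchain_eq (cb : ∀ P Q : M, P ⊗ Q ≅ Q ⊗ P) (θ : ∀ Y : M, Y ≅ G.dd Y)
    (hcbr : ∀ (P : M) {Q Q' : M} (f : Q ⟶ Q'), P ◁ f ≫ (cb P Q').hom = (cb P Q).hom ≫ f ▷ P)
    (hθ : ∀ (Y X : M) (h : G.dd Y ⊗ X ⟶ G.K),
      ((θ Y).hom ▷ X) ≫ h = (cb Y X).hom ≫ (G.g X Y).symm h)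
    (X Y Z : M) (h : G.dd (X ⊗ Y) ⊗ Z ⟶ G.K) :
    G.gchain X Y Z h = (((θ X).inv ⊗ₘ (θ Y).inv) ▷ Z) ≫ (α_ X Y Z).hom ≫
      (cb X (Y ⊗ Z)).hom ≫ (α_ Y Z X).hom ≫ (cb Y (Z ⊗ X)).hom ≫ (α_ Z X Y).hom ≫
      (G.g Z (X ⊗ Y)).symm h := by
  rw [G.gchain_apply, G.g_eq_theta cb θ hθ, G.g_eq_theta cb θ hθ]
  exact shuffle cb hcbr (θ X).inv (θ Y).inv ((G.g Z (X ⊗ Y)).symm h)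

end GVCat
end Aux3
section Aux4
open CategoryTheory Opposite MonoidalCategory BraidedCategory

set_option linter.unusedSectionVars false

namespace GVCat

variable {M : Type u} [Category.{v} M] [MonoidalCategory M] (G : GVCat M)
variable [BraidedCategory M]

theorem theta_tensor (cb : ∀ P Q : M, P ⊗ Q ≅ Q ⊗ P) (θ : ∀ Y : M, Y ≅ G.dd Y)
    (hcbr : ∀ (P : M) {Q Q' : M} (f : Q ⟶ Q'), P ◁ f ≫ (cb P Q').hom = (cb P Q).hom ≫ f ▷ P)
    (hcbl : ∀ {P P' : M} (f : P ⟶ P') (Q : M), f ▷ Q ≫ (cb P' Q).hom = (cb P Q).hom ≫ Q ◁ f)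
    (hθ : ∀ (Y X : M) (h : G.dd Y ⊗ X ⟶ G.K),
      ((θ Y).hom ▷ X) ≫ h = (cb Y X).hom ≫ (G.g X Y).symm h)
    (hbraid : ∀ X Y Z : M,
      (α_ X Y Z).hom ≫ (cb X (Y ⊗ Z)).hom ≫ (α_ Y Z X).hom ≫ (cb Y (Z ⊗ X)).hom ≫
        (α_ Z X Y).hom = (((cb X Y).hom ≫ (cb Y X).hom) ▷ Z) ≫ (cb (X ⊗ Y) Z).hom)
    (u : ∀ Y₁ Y₂ : M, G.dd (Y₁ ⊗ Y₂) ≅ G.dd Y₁ ⊗ G.dd Y₂) (hu : G.UChar u)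
    (X Y : M) :
    (θ (X ⊗ Y)).hom ≫ (u X Y).hom
      = ((θ X).hom ⊗ₘ (θ Y).hom) ≫ (cb (G.dd Y) (G.dd X)).inv ≫ (cb (G.dd X) (G.dd Y)).inv := by
  have key : ((θ X).hom ⊗ₘ (θ Y).hom) ≫ (cb (G.dd Y) (G.dd X)).inv ≫
      (cb (G.dd X) (G.dd Y)).inv ≫ ((θ X).inv ⊗ₘ (θ Y).inv) ≫ (cb X Y).hom ≫ (cb Y X).hom
      = 𝟙 (X ⊗ Y) := by
    rw [reassoc_of% (cb_inv_tensor_nat cb hcbr hcbl (θ X).hom (θ Y).hom),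
      reassoc_of% (cb_inv_tensor_nat cb hcbr hcbl (θ Y).hom (θ X).hom),
      tensorHom_comp_tensorHom_assoc, Iso.hom_inv_id, Iso.hom_inv_id, id_tensorHom_id, Category.id_comp]
    simp
  apply G.sep; intro Z h
  have hh : h = G.gchain X Y Z ((u X Y).hom ▷ Z ≫ h) := by
    rw [← hu, ← comp_whiskerRight_assoc, Iso.inv_hom_id, id_whiskerRight, Category.id_comp]
  rw [comp_whiskerRight, Category.assoc, hθ]
  conv_rhs => rw [hh, G.gchain_eq cb θ hcbr hθ]
  rw [reassoc_of% (hbraid X Y Z), ← comp_whiskerRight_assoc, ← comp_whiskerRight_assoc]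
  simp only [Category.assoc]
  rw [key, id_whiskerRight, Category.id_comp]

end GVCat
end Aux4
section Braid
open CategoryTheory MonoidalCategory BraidedCategory
namespace GVCat
variable {C : Type u} [Category.{v} C] [MonoidalCategory C] [BraidedCategory C]

theorem inv_yang_baxter (X Y Z : C) :
    (α_ Z Y X).inv ≫ (β_ Y Z).inv ▷ X ≫ (α_ Y Z X).hom ≫
    Y ◁ (β_ X Z).inv ≫ (α_ Y X Z).inv ≫ (β_ X Y).inv ▷ Z ≫ (α_ X Y Z).hom =
      Z ◁ (β_ X Y).inv ≫ (α_ Z X Y).inv ≫ (β_ X Z).inv ▷ Y ≫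
      (α_ X Z Y).hom ≫ X ◁ (β_ Y Z).inv := by
  have h := congrArg Iso.inv (yang_baxter_iso X Y Z)
  simpa using h

theorem braidA (X Y Z : C) :
    (α_ X Y Z).hom ≫ (β_ X (Y ⊗ Z)).hom ≫ (α_ Y Z X).hom ≫ (β_ Y (Z ⊗ X)).hom ≫ (α_ Z X Y).hom
      = (((β_ X Y).hom ≫ (β_ Y X).hom) ▷ Z) ≫ (β_ (X ⊗ Y) Z).hom := by
  simp only [braiding_tensor_right_hom, braiding_tensor_left_hom, comp_whiskerRight, Category.assoc,
    Iso.hom_inv_id_assoc, Iso.inv_hom_id_assoc]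
  rw [cancel_epi, ← cancel_epi (α_ Y X Z).inv, Iso.inv_hom_id_assoc]
  simp only [Iso.inv_hom_id, Category.comp_id]
  exact (yang_baxter Y X Z).symm

theorem braidB (X Y Z : C) :
    (α_ X Y Z).hom ≫ (β_ (Y ⊗ Z) X).inv ≫ (α_ Y Z X).hom ≫ (β_ (Z ⊗ X) Y).inv ≫ (α_ Z X Y).hom
      = (((β_ Y X).inv ≫ (β_ X Y).inv) ▷ Z) ≫ (β_ Z (X ⊗ Y)).inv := by
  simp only [braiding_tensor_left_inv, braiding_tensor_right_inv, comp_whiskerRight, Category.assoc,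
    Iso.hom_inv_id_assoc, Iso.inv_hom_id_assoc]
  rw [cancel_epi, ← cancel_epi (α_ Y X Z).inv, Iso.inv_hom_id_assoc]
  simp only [Iso.inv_hom_id, Category.comp_id]
  exact (inv_yang_baxter Z X Y).symm

end GVCat
end Braid

/-- Let `(M, K, β)` be a braided Grothendieck–Verdier category. Then
(i) the monoidal functor `D²` (with its canonical monoidal structure `u`) is braided, and
(ii) `γ = θ⁺θ⁻ : Id ≅ D⁴`, given by `γ_X = θ⁺_{D²X} ∘ θ⁻_X`, is a monoidal natural
isomorphism `D⁴ ≅ Id`, and moreover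
`γ_X = θ⁺_{D²X} ∘ θ⁻_X = D²(θ⁺_X) ∘ θ⁻_X = θ⁻_{D²X} ∘ θ⁺_X = D²(θ⁻_X) ∘ θ⁺_X`. -/
theorem stmt16 {M : Type u} [Category.{v} M] [MonoidalCategory M] [BraidedCategory M]
    (G : GVCat M)
    (u : ∀ Y₁ Y₂ : M, G.dd (Y₁ ⊗ Y₂) ≅ G.dd Y₁ ⊗ G.dd Y₂)
    (hu : G.UChar u)
    (η : 𝟙_ M ⟶ G.dd (𝟙_ M))
    (hη : G.EtaChar η)
    (θp θm : ∀ Y : M, Y ≅ G.dd Y)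
    (hθp : G.ThetaPlusChar θp) (hθm : G.ThetaMinusChar θm) :
    -- (i) `D²` is braided
    (∀ X Y : M,
      G.ddF.map (β_ X Y).hom ≫ (u Y X).hom
        = (u X Y).hom ≫ (β_ (G.dd X) (G.dd Y)).hom)
    -- (ii) `γ` is a natural transformation `Id ⟶ D⁴`…
    ∧ (∀ {X Y : M} (q : X ⟶ Y),
        q ≫ ((θm Y).hom ≫ (θp (G.dd Y)).hom)
          = ((θm X).hom ≫ (θp (G.dd X)).hom) ≫ G.ddF.map (G.ddF.map q))
    -- … each `γ_X` is an isomorphism …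
    ∧ (∀ X : M, IsIso ((θm X).hom ≫ (θp (G.dd X)).hom))
    -- … `γ` is compatible with the tensorators of `Id` and `D⁴` …
    ∧ (∀ X Y : M,
        ((θm (X ⊗ Y)).hom ≫ (θp (G.dd (X ⊗ Y))).hom)
            ≫ G.ddF.map (u X Y).hom ≫ (u (G.dd X) (G.dd Y)).hom
          = (((θm X).hom ≫ (θp (G.dd X)).hom) ⊗ₘ ((θm Y).hom ≫ (θp (G.dd Y)).hom)))
    -- … and with the units
    ∧ (((θm (𝟙_ M)).hom ≫ (θp (G.dd (𝟙_ M))).hom) = η ≫ G.ddF.map η)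
    -- the four expressions for `γ_X` agree
    ∧ (∀ X : M,
        (θm X).hom ≫ (θp (G.dd X)).hom = (θm X).hom ≫ G.ddF.map (θp X).hom
        ∧ (θm X).hom ≫ (θp (G.dd X)).hom = (θp X).hom ≫ (θm (G.dd X)).hom
        ∧ (θm X).hom ≫ (θp (G.dd X)).hom = (θp X).hom ≫ G.ddF.map (θm X).hom) := by
  have hnatp : ∀ {X Y : M} (q : X ⟶ Y), q ≫ (θp Y).hom = (θp X).hom ≫ G.ddF.map q :=
    fun q => G.theta_natural (fun P Q => β_ P Q) θp
      (fun {P P'} f Q => BraidedCategory.braiding_naturality_left f Q) hθp q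
  have hnatm : ∀ {X Y : M} (q : X ⟶ Y), q ≫ (θm Y).hom = (θm X).hom ≫ G.ddF.map q :=
    fun q => G.theta_natural (fun P Q => (β_ Q P).symm) θm
      (fun {P P'} f Q => BraidedCategory.braiding_inv_naturality_left f Q) hθm q
  have hddp : ∀ X : M, (θp (G.dd X)).hom = G.ddF.map (θp X).hom :=
    fun X => G.theta_dd (fun P Q => β_ P Q) θp
      (fun {P P'} f Q => BraidedCategory.braiding_naturality_left f Q) hθp X
  have hddm : ∀ X : M, (θm (G.dd X)).hom = G.ddF.map (θm X).hom :=
    fun X => G.theta_dd (fun P Q => (β_ Q P).symm) θm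
      (fun {P P'} f Q => BraidedCategory.braiding_inv_naturality_left f Q) hθm X
  have hup : ∀ X Y : M, (θp (X ⊗ Y)).hom ≫ (u X Y).hom
      = ((θp X).hom ⊗ₘ (θp Y).hom) ≫ (β_ (G.dd Y) (G.dd X)).inv ≫ (β_ (G.dd X) (G.dd Y)).inv :=
    fun X Y => G.theta_tensor (fun P Q => β_ P Q) θp
      (fun P {Q Q'} f => BraidedCategory.braiding_naturality_right P f)
      (fun {P P'} f Q => BraidedCategory.braiding_naturality_left f Q) hθp
      (fun X Y Z => GVCat.braidA X Y Z) u hu X Y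
  have hum : ∀ X Y : M, (θm (X ⊗ Y)).hom ≫ (u X Y).hom
      = ((θm X).hom ⊗ₘ (θm Y).hom) ≫ (β_ (G.dd X) (G.dd Y)).hom ≫ (β_ (G.dd Y) (G.dd X)).hom :=
    fun X Y => G.theta_tensor (fun P Q => (β_ Q P).symm) θm
      (fun P {Q Q'} f => BraidedCategory.braiding_inv_naturality_right P f)
      (fun {P P'} f Q => BraidedCategory.braiding_inv_naturality_left f Q) hθm
      (fun X Y Z => GVCat.braidB X Y Z) u hu X Y
  have hu1p : (θp (𝟙_ M)).hom = η :=
    G.theta_unit (fun P Q => β_ P Q) θp hθp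
      (fun Z => braiding_tensorUnit_left Z) η hη
  have hu1m : (θm (𝟙_ M)).hom = η :=
    G.theta_unit (fun P Q => (β_ Q P).symm) θm hθm
      (fun Z => braiding_inv_tensorUnit_right Z) η hη
  refine ⟨?_, ?_, ?_, ?_, ?_, ?_⟩
  · -- (i)
    intro X Y
    erw [← cancel_epi (θp (X ⊗ Y)).hom]
    calc (θp (X ⊗ Y)).hom ≫ G.ddF.map (β_ X Y).hom ≫ (u Y X).hom
        = (β_ X Y).hom ≫ (θp (Y ⊗ X)).hom ≫ (u Y X).hom := by
          erw [← Category.assoc, ← hnatp, Category.assoc]; rfl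
      _ = (β_ X Y).hom ≫ ((θp Y).hom ⊗ₘ (θp X).hom) ≫ (β_ (G.dd X) (G.dd Y)).inv
            ≫ (β_ (G.dd Y) (G.dd X)).inv := by rw [hup]
      _ = ((θp X).hom ⊗ₘ (θp Y).hom) ≫ (β_ (G.dd X) (G.dd Y)).hom
            ≫ (β_ (G.dd X) (G.dd Y)).inv ≫ (β_ (G.dd Y) (G.dd X)).inv := by
          rw [← BraidedCategory.braiding_naturality_assoc]
      _ = ((θp X).hom ⊗ₘ (θp Y).hom) ≫ (β_ (G.dd Y) (G.dd X)).inv := by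
          rw [Iso.hom_inv_id_assoc]
      _ = (θp (X ⊗ Y)).hom ≫ (u X Y).hom ≫ (β_ (G.dd X) (G.dd Y)).hom := by
          rw [reassoc_of% (hup X Y)]
          rw [Iso.inv_hom_id, Category.comp_id]
  · -- (ii)
    intro X Y q
    erw [← Category.assoc, hnatm q, Category.assoc,
      show G.ddF.map q ≫ (θp (G.dd Y)).hom = (θp (G.dd X)).hom ≫ G.ddF.map (G.ddF.map q)
        from hnatp (G.ddF.map q), ← Category.assoc]; rfl
  · -- (iii)
    intro X
    infer_instance
  · -- (iv)
    intro X Y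
    erw [Category.assoc, ← Category.assoc (θp (G.dd (X ⊗ Y))).hom, ← hnatp, Category.assoc,
      reassoc_of% (hum X Y), hup (G.dd X) (G.dd Y),
      ← BraidedCategory.braiding_naturality_assoc (θp (G.dd Y)).hom (θp (G.dd X)).hom]
    simp only [Iso.hom_inv_id_assoc]
    rw [← BraidedCategory.braiding_naturality_assoc (θp (G.dd X)).hom (θp (G.dd Y)).hom]
    simp only [Iso.hom_inv_id_assoc, Iso.hom_inv_id, Category.comp_id, Category.assoc]
    rw [tensorHom_comp_tensorHom]
  · -- (v)
    rw [hu1m, hddp, hu1p]; rfl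
  · -- (vi)
    intro X
    refine ⟨?_, ?_, ?_⟩
    · rw [hddp X]; rfl
    · erw [hddp X, ← hnatm (θp X).hom]
    · erw [hddp X, ← hnatm (θp X).hom, hddm X]; rfl
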